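/- Let d ∈ ℕ with d ≥ 2, κ ∈ ℝ \ {0}, and Λ ∈ ℝ. Let X_1, …, X_d : ℝ → ℝ be twice differentiable with X_l(t) > 0 for all t, let φ be differentiable, and let ρ, p : ℝ → ℝ and V : ℝ → ℝ satisfy the Bianchi I Einstein equations (I_0), (I_1), …, (I_d) for all t ∈ ℝ. Let θ > 0, let σ satisfy σ'(t) = 1/(θ X_1(t)⋯X_d(t)) for all t with differentiable inverse g (g(σ(t)) = t). Then: (a) the function t ↦ −(θ²/(d−1)) X_1(t)²⋯X_d(t)² · Σ_{1≤l<k≤d}(H_l(t) − H_k(t))² is constant on ℝ, where H_l = X_l'/X_l; write its value as E. (b) With u(s) = 1/(X_1⋯X_d)(g(s)), ψ = φ∘g, P(s) = (dκ/(d−1)) ψ'(s)², ρ̃ = ρ∘g, and p̃ = p∘g, for every t ∈ ℝ, at s = σ(t) the function u is twice differentiable and satisfies u''(s) + [E − P(s)]u(s) = θ²dκ(ρ̃(s) + p̃(s))/((d−1) u(s)). -/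

import Mathlib

/-!
Write `F = X_1 ⋯ X_d` and `S = ∑ H_l`, so that `F' = F S`. In the equation `(I_i)` the index `i`
enters only through `H_i' + H_i S`, so this quantity is the same for all `i`; hence
`(F (H_l - H_k))' = 0` for all `l, k`, which gives the conserved quantity `E`. Summing the
equations `(I_i)` and subtracting `d` times `(I_0)` gives the trace identity
`(d - 1) S' + ∑_{l<k} (H_l - H_k)^2 + dκ (φ'^2 + ρ + p) = 0`. In the time `s = σ(t)` one has
`dt/ds = θ F`, so `u = 1/F` satisfies `du/ds = -θ S` and `d²u/ds² = -θ² F S'`, and the trace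
identity becomes the equation for `u`.
-/

open Finset Filter Topology

section PairSums

variable {ι R : Type*} [Fintype ι] [LinearOrder ι]

theorem two_mul_sum_pairs_lt_of_symm [CommRing R] (G : ι → ι → R)
    (hG : ∀ i j, G i j = G j i) :
    2 * ∑ pr ∈ univ.filter (fun pr : ι × ι => pr.1 < pr.2), G pr.1 pr.2
      = ∑ i, ∑ j, G i j - ∑ i, G i i := by
  have hswap : ∑ pr ∈ univ.filter (fun pr : ι × ι => pr.2 < pr.1), G pr.1 pr.2
      = ∑ pr ∈ univ.filter (fun pr : ι × ι => pr.1 < pr.2), G pr.1 pr.2 :=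
    sum_nbij' Prod.swap Prod.swap (by simp) (by simp) (by simp) (by simp)
      fun pr _ => hG _ _
  have hdiag : ∑ pr ∈ univ.filter (fun pr : ι × ι => pr.1 = pr.2), G pr.1 pr.2
      = ∑ i, G i i := by
    rw [sum_filter, ← univ_product_univ, sum_product]
    exact sum_congr rfl fun i _ => sum_ite_eq _ _ _ |>.trans (if_pos (mem_univ i))
  have hsplit : ∑ i, ∑ j, G i j
      = ∑ pr ∈ univ.filter (fun pr : ι × ι => pr.1 < pr.2), G pr.1 pr.2
        + ∑ pr ∈ univ.filter (fun pr : ι × ι => pr.2 < pr.1), G pr.1 pr.2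
        + ∑ pr ∈ univ.filter (fun pr : ι × ι => pr.1 = pr.2), G pr.1 pr.2 := by
    rw [← Fintype.sum_prod_type', sum_filter, sum_filter, sum_filter, ← sum_add_distrib,
      ← sum_add_distrib]
    refine sum_congr rfl fun pr _ => ?_
    rcases lt_trichotomy pr.1 pr.2 with h | h | h
    · simp [h, h.ne, h.not_gt]
    · simp [h]
    · simp [h, h.ne', h.not_gt]
  rw [hsplit, hswap, hdiag]
  ring

theorem two_mul_sum_pairs_lt_mul [CommRing R] (f : ι → R) :
    2 * ∑ pr ∈ univ.filter (fun pr : ι × ι => pr.1 < pr.2), f pr.1 * f pr.2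
      = (∑ i, f i) ^ 2 - ∑ i, f i ^ 2 := by
  rw [two_mul_sum_pairs_lt_of_symm (fun i j => f i * f j) fun i j => mul_comm _ _, sq,
    sum_mul_sum]
  simp only [sq]

theorem two_mul_sum_pairs_lt_mul_of_ne [CommRing R] (f : ι → R) (i : ι) :
    2 * ∑ pr ∈ univ.filter (fun pr : ι × ι => pr.1 < pr.2 ∧ pr.1 ≠ i ∧ pr.2 ≠ i),
        f pr.1 * f pr.2
      = (∑ l, f l - f i) ^ 2 - (∑ l, f l ^ 2 - f i ^ 2) := by
  set g : ι → R := Function.update f i 0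
  have hpairs :
      ∑ pr ∈ univ.filter (fun pr : ι × ι => pr.1 < pr.2 ∧ pr.1 ≠ i ∧ pr.2 ≠ i),
        f pr.1 * f pr.2
      = ∑ pr ∈ univ.filter (fun pr : ι × ι => pr.1 < pr.2), g pr.1 * g pr.2 := by
    rw [← filter_filter, sum_filter]
    refine sum_congr rfl fun pr _ => ?_
    by_cases h1 : pr.1 = i <;> by_cases h2 : pr.2 = i <;> simp [g, h1, h2]
  have hsum_g : ∀ r : R → R, r 0 = 0 → ∑ l, r (g l) = ∑ l, r (f l) - r (f i) := by
    intro r hr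
    simp only [g, Function.apply_update (fun _ => r), hr]
    rw [sum_update_of_mem (mem_univ i), zero_add,
      sum_eq_sum_sdiff_singleton_add (mem_univ i) fun l => r (f l), add_sub_cancel_right]
  rw [hpairs, two_mul_sum_pairs_lt_mul, hsum_g (fun x => x) rfl,
    hsum_g (· ^ 2) (zero_pow two_ne_zero)]

theorem sum_pairs_lt_sub_sq [CommRing R] [NoZeroDivisors R] [CharZero R] (f : ι → R) :
    ∑ pr ∈ univ.filter (fun pr : ι × ι => pr.1 < pr.2), (f pr.1 - f pr.2) ^ 2
      = Fintype.card ι * ∑ i, f i ^ 2 - (∑ i, f i) ^ 2 := by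
  refine mul_left_cancel₀ (two_ne_zero (α := R)) ?_
  rw [two_mul_sum_pairs_lt_of_symm (fun i j => (f i - f j) ^ 2) fun i j => by ring]
  have hexp : ∀ i j, (f i - f j) ^ 2 = f i ^ 2 + f j ^ 2 - 2 * f i * f j := fun i j => by ring
  simp only [hexp, sum_add_distrib, sum_sub_distrib, ← mul_sum, ← sum_mul, sum_const,
    card_univ, nsmul_eq_mul, sub_self]
  ring

end PairSums

section BianchiAlgebra

variable {ι K : Type*} [Fintype ι] [LinearOrder ι] [Field K] [CharZero K]

theorem sum_filter_ne_add_sum_pairs_ne (a b : ι → K) (i : ι) :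
    ∑ l ∈ univ.filter (fun l => l ≠ i), (a l + b l ^ 2)
        + ∑ pr ∈ univ.filter (fun pr : ι × ι => pr.1 < pr.2 ∧ pr.1 ≠ i ∧ pr.2 ≠ i),
            b pr.1 * b pr.2
      = ∑ l, a l + (∑ l, b l ^ 2 + (∑ l, b l) ^ 2) / 2 - (a i + b i * ∑ l, b l) := by
  rw [filter_ne', sum_erase_eq_sub (mem_univ i), sum_add_distrib]
  linear_combination (1 / 2 : K) * two_mul_sum_pairs_lt_mul_of_ne b i

theorem add_mul_sum_eq_of_forall_sum_filter_ne_eq (a b : ι → K) (c : K)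
    (hc : ∀ i, ∑ l ∈ univ.filter (fun l => l ≠ i), (a l + b l ^ 2)
        + ∑ pr ∈ univ.filter (fun pr : ι × ι => pr.1 < pr.2 ∧ pr.1 ≠ i ∧ pr.2 ≠ i),
            b pr.1 * b pr.2 = c)
    (i k : ι) : a i + b i * ∑ l, b l = a k + b k * ∑ l, b l := by
  have hi := hc i
  have hk := hc k
  rw [sum_filter_ne_add_sum_pairs_ne] at hi hk
  linear_combination hk - hi

theorem bianchi_trace_identity (h h' : ι → K) (κ Λ v w ρ p : K)
    (h0 : ∑ pr ∈ univ.filter (fun pr : ι × ι => pr.1 < pr.2), h pr.1 * h pr.2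
      = κ * (v ^ 2 / 2 + w + ρ) + Λ)
    (hi : ∀ i, ∑ l ∈ univ.filter (fun l => l ≠ i), (h' l + h l ^ 2)
        + ∑ pr ∈ univ.filter (fun pr : ι × ι => pr.1 < pr.2 ∧ pr.1 ≠ i ∧ pr.2 ≠ i),
            h pr.1 * h pr.2 = -κ * (v ^ 2 / 2 - w + p) + Λ) :
    ((Fintype.card ι : K) - 1) * ∑ l, h' l
        + ∑ pr ∈ univ.filter (fun pr : ι × ι => pr.1 < pr.2), (h pr.1 - h pr.2) ^ 2
        + Fintype.card ι * κ * (v ^ 2 + ρ + p) = 0 := by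
  have hsum :
      ∑ i, (∑ l, h' l + (∑ l, h l ^ 2 + (∑ l, h l) ^ 2) / 2 - (h' i + h i * ∑ l, h l))
        = ∑ _i : ι, (-κ * (v ^ 2 / 2 - w + p) + Λ) :=
    sum_congr rfl fun i _ => (sum_filter_ne_add_sum_pairs_ne h' h i).symm.trans (hi i)
  simp only [sum_sub_distrib, sum_add_distrib, ← sum_mul, sum_const, card_univ,
    nsmul_eq_mul] at hsum
  linear_combination hsum - (Fintype.card ι : K) * h0
    + sum_pairs_lt_sub_sq h + (Fintype.card ι / 2) * two_mul_sum_pairs_lt_mul h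

end BianchiAlgebra

theorem hasDerivAt_finset_prod_mul_sum_logDeriv {𝕜 ι : Type*} [NontriviallyNormedField 𝕜]
    {s : Finset ι} {X : ι → 𝕜 → 𝕜} {t : 𝕜}
    (hX : ∀ l ∈ s, DifferentiableAt 𝕜 (X l) t) (hX0 : ∀ l ∈ s, X l t ≠ 0) :
    HasDerivAt (fun t => ∏ l ∈ s, X l t)
      ((∏ l ∈ s, X l t) * ∑ l ∈ s, logDeriv (X l) t) t := by
  rw [← logDeriv_prod hX0 hX, logDeriv_apply, mul_div_cancel₀ _ (prod_ne_zero_iff.2 hX0)]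
  exact (DifferentiableAt.fun_finsetProd hX).hasDerivAt

theorem mul_eq_mul_of_hasDerivAt_eq_neg_mul {F S w : ℝ → ℝ}
    (hF : ∀ t, HasDerivAt F (F t * S t) t) (hw : ∀ t, HasDerivAt w (-(S t * w t)) t)
    (t₁ t₂ : ℝ) : F t₁ * w t₁ = F t₂ * w t₂ :=
  is_const_of_deriv_eq_zero (fun t => ((hF t).mul (hw t)).differentiableAt)
    (fun t => ((hF t).mul (hw t)).deriv.trans (by ring)) t₁ t₂

theorem sq_mul_sum_pairs_sub_sq_eq {ι : Type*} [Fintype ι] [LinearOrder ι] {F : ℝ → ℝ}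
    {H : ι → ℝ → ℝ} (hF : ∀ t, HasDerivAt F (F t * ∑ l, H l t) t)
    (hH : ∀ l, Differentiable ℝ (H l))
    (hkey : ∀ l k t, deriv (H l) t + H l t * ∑ j, H j t = deriv (H k) t + H k t * ∑ j, H j t)
    (t₁ t₂ : ℝ) :
    F t₁ ^ 2 * ∑ pr ∈ univ.filter (fun pr : ι × ι => pr.1 < pr.2),
          (H pr.1 t₁ - H pr.2 t₁) ^ 2
      = F t₂ ^ 2 * ∑ pr ∈ univ.filter (fun pr : ι × ι => pr.1 < pr.2),
          (H pr.1 t₂ - H pr.2 t₂) ^ 2 := by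
  have hconst (l k : ι) : F t₁ * (H l t₁ - H k t₁) = F t₂ * (H l t₂ - H k t₂) :=
    mul_eq_mul_of_hasDerivAt_eq_neg_mul hF
      (fun t => ((hH l t).hasDerivAt.sub (hH k t).hasDerivAt).congr_deriv
        (by simp only [Pi.sub_apply]; linear_combination hkey l k t)) t₁ t₂
  rw [mul_sum, mul_sum]
  exact sum_congr rfl fun pr _ => by rw [← mul_pow, ← mul_pow, hconst]

theorem hasDerivAt_of_leftInverse {𝕜 : Type*} [NontriviallyNormedField 𝕜] {σ g : 𝕜 → 𝕜}
    {c t : 𝕜} (hσ : HasDerivAt σ c⁻¹ t) (hg : DifferentiableAt 𝕜 g (σ t)) (hgσ : Function.LeftInverse g σ) :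
    HasDerivAt g c (σ t) := by
  have hcomp := hg.hasDerivAt.comp t hσ
  rw [show g ∘ σ = id from funext hgσ] at hcomp
  rw [← inv_inv c, ← eq_inv_of_mul_eq_one_left (hcomp.unique (hasDerivAt_id t))]
  exact hg.hasDerivAt

theorem range_mem_nhds_of_hasDerivAt {σ σ' : ℝ → ℝ} {t : ℝ}
    (hσ : ∀ t, HasDerivAt σ (σ' t) t) (hσ' : ContinuousAt σ' t) (h0 : σ' t ≠ 0) :
    Set.range σ ∈ 𝓝 (σ t) :=
  (hasStrictDerivAt_of_hasDerivAt_of_continuousAt (.of_forall hσ) hσ').map_nhds_eq h0 ▸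
    range_mem_map

section TimeChange

variable {F S σ g : ℝ → ℝ} {θ : ℝ}

theorem hasDerivAt_inv_comp_of_leftInverse (hF : ∀ t, HasDerivAt F (F t * S t) t)
    (hF0 : ∀ t, F t ≠ 0) (hσ : ∀ t, HasDerivAt σ (θ * F t)⁻¹ t)
    (hg : Differentiable ℝ g) (hgσ : Function.LeftInverse g σ) (t : ℝ) :
    HasDerivAt (fun s => (F (g s))⁻¹) (-(θ * S t)) (σ t) := by
  have hFg : HasDerivAt (fun s => F (g s)) (F t * S t * (θ * F t)) (σ t) :=
    (hF t).comp_of_eq (σ t) (hasDerivAt_of_leftInverse (hσ t) (hg _) hgσ) (hgσ t).symm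
  refine (hFg.inv (by rw [hgσ t]; exact hF0 t)).congr_deriv ?_
  rw [hgσ t]
  field_simp [hF0 t]

theorem deriv_inv_comp_eventuallyEq (hF : ∀ t, HasDerivAt F (F t * S t) t)
    (hF0 : ∀ t, F t ≠ 0) (hθ : θ ≠ 0) (hσ : ∀ t, HasDerivAt σ (θ * F t)⁻¹ t)
    (hg : Differentiable ℝ g) (hgσ : Function.LeftInverse g σ) (t : ℝ) :
    deriv (fun s => (F (g s))⁻¹) =ᶠ[𝓝 (σ t)] fun s => -(θ * S (g s)) := by
  have hcont : ContinuousAt (fun t => (θ * F t)⁻¹) t :=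
    (continuousAt_const.mul (hF t).continuousAt).inv₀ (mul_ne_zero hθ (hF0 t))
  filter_upwards [range_mem_nhds_of_hasDerivAt hσ hcont
    (inv_ne_zero (mul_ne_zero hθ (hF0 t)))] with s ⟨t', hs⟩
  rw [← hs, (hasDerivAt_inv_comp_of_leftInverse hF hF0 hσ hg hgσ t').deriv, hgσ t']

theorem hasDerivAt_deriv_inv_comp {S' : ℝ} (hF : ∀ t, HasDerivAt F (F t * S t) t)
    (hF0 : ∀ t, F t ≠ 0) (hθ : θ ≠ 0) (hσ : ∀ t, HasDerivAt σ (θ * F t)⁻¹ t)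
    (hg : Differentiable ℝ g) (hgσ : Function.LeftInverse g σ) {t : ℝ}
    (hS : HasDerivAt S S' t) :
    HasDerivAt (deriv fun s => (F (g s))⁻¹) (-(θ * (S' * (θ * F t)))) (σ t) := by
  rw [(deriv_inv_comp_eventuallyEq hF hF0 hθ hσ hg hgσ t).hasDerivAt_iff]
  have hSg := hS.comp_of_eq (σ t) (hasDerivAt_of_leftInverse (hσ t) (hg _) hgσ) (hgσ t).symm
  exact (hSg.const_mul θ).neg

end TimeChange

theorem stmt_14_general
    (d : ℕ) (hd : 2 ≤ d) (κ Λ : ℝ)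
    (X : Fin d → ℝ → ℝ) (φ ρ p V : ℝ → ℝ)
    (hX : ∀ l, Differentiable ℝ (X l)) (hX' : ∀ l, Differentiable ℝ (deriv (X l)))
    (hXpos : ∀ l t, 0 < X l t)
    (hφ : Differentiable ℝ φ)
    (H : Fin d → ℝ → ℝ) (hH : ∀ l t, H l t = deriv (X l) t / X l t)
    (hI0 : ∀ t, (∑ pr ∈ Finset.univ.filter (fun pr : Fin d × Fin d => pr.1 < pr.2),
          H pr.1 t * H pr.2 t)
        = κ * ((deriv φ t) ^ 2 / 2 + V (φ t) + ρ t) + Λ)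
    (hIi : ∀ i : Fin d, ∀ t,
        (∑ l ∈ Finset.univ.filter (fun l => l ≠ i), (deriv (H l) t + H l t ^ 2))
          + (∑ pr ∈ Finset.univ.filter
              (fun pr : Fin d × Fin d => pr.1 < pr.2 ∧ pr.1 ≠ i ∧ pr.2 ≠ i),
              H pr.1 t * H pr.2 t)
        = -κ * ((deriv φ t) ^ 2 / 2 - V (φ t) + p t) + Λ)
    (θ : ℝ) (hθ : 0 < θ)
    (σ g : ℝ → ℝ)
    (hσ : ∀ t, deriv σ t = 1 / (θ * ∏ l, X l t))
    (hg : Differentiable ℝ g) (hgσ : ∀ t, g (σ t) = t)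
    (u ψ P : ℝ → ℝ)
    (hu : ∀ s, u s = 1 / ∏ l, X l (g s))
    (hψ : ∀ s, ψ s = φ (g s))
    (hP : ∀ s, P s = ((d : ℝ) * κ / ((d : ℝ) - 1)) * (deriv ψ s) ^ 2) :
    (∀ t₁ t₂,
      -(θ ^ 2 / ((d : ℝ) - 1)) * (∏ l, X l t₁) ^ 2 *
          (∑ pr ∈ Finset.univ.filter (fun pr : Fin d × Fin d => pr.1 < pr.2),
            (H pr.1 t₁ - H pr.2 t₁) ^ 2)
        = -(θ ^ 2 / ((d : ℝ) - 1)) * (∏ l, X l t₂) ^ 2 *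
          (∑ pr ∈ Finset.univ.filter (fun pr : Fin d × Fin d => pr.1 < pr.2),
            (H pr.1 t₂ - H pr.2 t₂) ^ 2)) ∧
    ∀ E : ℝ,
      (∀ t, -(θ ^ 2 / ((d : ℝ) - 1)) * (∏ l, X l t) ^ 2 *
          (∑ pr ∈ Finset.univ.filter (fun pr : Fin d × Fin d => pr.1 < pr.2),
            (H pr.1 t - H pr.2 t) ^ 2) = E) →
      ∀ t, DifferentiableAt ℝ u (σ t) ∧ DifferentiableAt ℝ (deriv u) (σ t) ∧
        deriv (deriv u) (σ t) + (E - P (σ t)) * u (σ t)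
          = θ ^ 2 * (d : ℝ) * κ * (ρ (g (σ t)) + p (g (σ t)))
              / (((d : ℝ) - 1) * u (σ t)) := by
  set F : ℝ → ℝ := fun t => ∏ l, X l t
  have hF0 (t : ℝ) : F t ≠ 0 := prod_ne_zero_iff.2 fun l _ => (hXpos l t).ne'
  have hHd (l : Fin d) : Differentiable ℝ (H l) := by
    rw [show H l = fun t => deriv (X l) t / X l t from funext (hH l)]
    exact (hX' l).div (hX l) fun t => (hXpos l t).ne'
  have hF (t : ℝ) : HasDerivAt F (F t * ∑ l, H l t) t := by
    simpa only [logDeriv_apply, ← hH] using hasDerivAt_finset_prod_mul_sum_logDeriv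
      (fun l _ => (hX l).differentiableAt) fun l _ => (hXpos l t).ne'
  have hσ' (t : ℝ) : HasDerivAt σ (θ * F t)⁻¹ t := by
    have hσt : deriv σ t = (θ * F t)⁻¹ := (hσ t).trans (one_div _)
    have hσ0 : deriv σ t ≠ 0 := hσt ▸ inv_ne_zero (mul_ne_zero hθ.ne' (hF0 t))
    exact hσt ▸ (differentiableAt_of_deriv_ne_zero hσ0).hasDerivAt
  have hkey (l k : Fin d) (t : ℝ) :
      deriv (H l) t + H l t * ∑ j, H j t = deriv (H k) t + H k t * ∑ j, H j t :=
    add_mul_sum_eq_of_forall_sum_filter_ne_eq (fun l => deriv (H l) t)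
      (fun l => H l t) _ (fun i => hIi i t) l k
  refine ⟨fun t₁ t₂ => by rw [mul_assoc, mul_assoc, sq_mul_sum_pairs_sub_sq_eq hF hHd hkey],
    fun E hE t => ?_⟩
  obtain rfl : u = fun s => (F (g s))⁻¹ := funext fun s => by rw [hu, one_div]
  have hu'' := hasDerivAt_deriv_inv_comp hF hF0 hθ.ne' hσ' hg hgσ
    (HasDerivAt.fun_sum fun l _ => (hHd l t).hasDerivAt)
  have hψ' : deriv ψ (σ t) = deriv φ t * (θ * F t) := by
    rw [show ψ = φ ∘ g from funext hψ]
    exact ((hφ t).hasDerivAt.comp_of_eq (σ t) (hasDerivAt_of_leftInverse (hσ' t) (hg _) hgσ)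
      (hgσ t).symm).deriv
  have htrace := bianchi_trace_identity _ _ κ Λ _ _ _ _ (hI0 t) (hIi · t)
  simp only [Fintype.card_fin] at htrace
  refine ⟨(hasDerivAt_inv_comp_of_leftInverse hF hF0 hσ' hg hgσ t).differentiableAt,
    hu''.differentiableAt, ?_⟩
  rw [hu''.deriv, ← (hE t : -(θ ^ 2 / ((d : ℝ) - 1)) * F t ^ 2 * _ = E), hP, hψ']
  simp only [hgσ t]
  field_simp [hF0 t, sub_ne_zero.2 (Nat.cast_ne_one.2 (by omega) : (d : ℝ) ≠ 1)]
  linear_combination -F t ^ 2 * htrace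

/-- Bianchi I Einstein equations imply a Schrödinger-type equation. -/
theorem stmt_14
    (d : ℕ) (hd : 2 ≤ d) (κ Λ : ℝ) (hκ : κ ≠ 0)
    (X : Fin d → ℝ → ℝ) (φ ρ p V : ℝ → ℝ)
    (hX : ∀ l, Differentiable ℝ (X l)) (hX' : ∀ l, Differentiable ℝ (deriv (X l)))
    (hXpos : ∀ l t, 0 < X l t)
    (hφ : Differentiable ℝ φ)
    (H : Fin d → ℝ → ℝ) (hH : ∀ l t, H l t = deriv (X l) t / X l t)
    (hI0 : ∀ t, (∑ pr ∈ Finset.univ.filter (fun pr : Fin d × Fin d => pr.1 < pr.2),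
          H pr.1 t * H pr.2 t)
        = κ * ((deriv φ t) ^ 2 / 2 + V (φ t) + ρ t) + Λ)
    (hIi : ∀ i : Fin d, ∀ t,
        (∑ l ∈ Finset.univ.filter (fun l => l ≠ i), (deriv (H l) t + H l t ^ 2))
          + (∑ pr ∈ Finset.univ.filter
              (fun pr : Fin d × Fin d => pr.1 < pr.2 ∧ pr.1 ≠ i ∧ pr.2 ≠ i),
              H pr.1 t * H pr.2 t)
        = -κ * ((deriv φ t) ^ 2 / 2 - V (φ t) + p t) + Λ)
    (θ : ℝ) (hθ : 0 < θ)
    (σ g : ℝ → ℝ)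
    (hσ : ∀ t, deriv σ t = 1 / (θ * ∏ l, X l t))
    (hg : Differentiable ℝ g) (hgσ : ∀ t, g (σ t) = t)
    (u ψ P : ℝ → ℝ)
    (hu : ∀ s, u s = 1 / ∏ l, X l (g s))
    (hψ : ∀ s, ψ s = φ (g s))
    (hP : ∀ s, P s = ((d : ℝ) * κ / ((d : ℝ) - 1)) * (deriv ψ s) ^ 2) :
    (∀ t₁ t₂,
      -(θ ^ 2 / ((d : ℝ) - 1)) * (∏ l, X l t₁) ^ 2 *
          (∑ pr ∈ Finset.univ.filter (fun pr : Fin d × Fin d => pr.1 < pr.2),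
            (H pr.1 t₁ - H pr.2 t₁) ^ 2)
        = -(θ ^ 2 / ((d : ℝ) - 1)) * (∏ l, X l t₂) ^ 2 *
          (∑ pr ∈ Finset.univ.filter (fun pr : Fin d × Fin d => pr.1 < pr.2),
            (H pr.1 t₂ - H pr.2 t₂) ^ 2)) ∧
    ∀ E : ℝ,
      (∀ t, -(θ ^ 2 / ((d : ℝ) - 1)) * (∏ l, X l t) ^ 2 *
          (∑ pr ∈ Finset.univ.filter (fun pr : Fin d × Fin d => pr.1 < pr.2),
            (H pr.1 t - H pr.2 t) ^ 2) = E) →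
      ∀ t, DifferentiableAt ℝ u (σ t) ∧ DifferentiableAt ℝ (deriv u) (σ t) ∧
        deriv (deriv u) (σ t) + (E - P (σ t)) * u (σ t)
          = θ ^ 2 * (d : ℝ) * κ * (ρ (g (σ t)) + p (g (σ t)))
              / (((d : ℝ) - 1) * u (σ t)) :=
  stmt_14_general d hd κ Λ X φ ρ p V hX hX' hXpos hφ H hH hI0 hIi θ hθ σ g hσ hg hgσ u ψ P hu hψ hP
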